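/- For every integer n ≥ 1, the degenerate distance-number of the complete bipartite graph K_{3,n} satisfies ⌈√(n/2)⌉ ≤ ddn(K_{3,n}) ≤ 3⌈√(n/2)⌉ − 1. -/

import Mathlib

/-!
Lower bound: in a drawing with `ℓ` edge-lengths, each of the `n` vertices on the large side is
determined by its distances to two fixed vertices on the small side up to the (at most two)
intersection points of two circles, so `n ≤ 2ℓ²`.

Upper bound: place the small side at `(-1/2, 0)`, `(0, 0)`, `(1/2, 0)` and the large side at the
`2k²` intersection points of circles of radii `√(1 + i/k)` about `(-1/2, 0)` and `√(1 + j/k)`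
about `(1/2, 0)`, `0 ≤ i, j < k`. By Apollonius' theorem such a point is at distance
`√(3/4 + (i + j)/(2k))` from the origin, so only `k + (2k - 1)` lengths occur.
-/

noncomputable section

/-- The Euclidean plane. -/
abbrev Plane : Type := EuclideanSpace ℝ (Fin 2)

/-- The set of edge-lengths determined by a map `f` of the vertices of `G` to the plane. -/
def SimpleGraph.edgeLengths {V : Type*} (G : SimpleGraph V) (f : V → Plane) : Set ℝ :=
  {d : ℝ | ∃ u v : V, G.Adj u v ∧ Dist.dist (f u) (f v) = d}

/-- A degenerate drawing of `G`: an injective map from the vertices to the plane. -/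
def SimpleGraph.IsDegenDrawing {V : Type*} (_G : SimpleGraph V) (f : V → Plane) : Prop :=
  Function.Injective f

/-- A drawing of `G`: a degenerate drawing such that no vertex lies on the open segment
representing an edge. -/
def SimpleGraph.IsDrawing {V : Type*} (G : SimpleGraph V) (f : V → Plane) : Prop :=
  Function.Injective f ∧ ∀ u v w : V, G.Adj u v → f w ∉ openSegment ℝ (f u) (f v)

/-- The degenerate distance-number of `G`: the minimum number of distinct edge-lengths
in a degenerate drawing of `G`. -/
def SimpleGraph.ddn {V : Type*} (G : SimpleGraph V) : ℕ :=
  sInf {k : ℕ | ∃ f : V → Plane, G.IsDegenDrawing f ∧ (G.edgeLengths f).ncard = k}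

/-- The distance-number of `G`: the minimum number of distinct edge-lengths
in a drawing of `G`. -/
def SimpleGraph.dn {V : Type*} (G : SimpleGraph V) : ℕ :=
  sInf {k : ℕ | ∃ f : V → Plane, G.IsDrawing f ∧ (G.edgeLengths f).ncard = k}

open Function Finset

namespace EuclideanGeometry

variable {V P : Type*} [NormedAddCommGroup V] [InnerProductSpace ℝ V] [MetricSpace P]
  [NormedAddTorsor V P] [FiniteDimensional ℝ V]

theorem card_le_two_of_forall_dist_eq (hd : Module.finrank ℝ V = 2) {s : Finset P}
    {c₁ c₂ : P} {r₁ r₂ : ℝ} (hc : c₁ ≠ c₂) (h₁ : ∀ p ∈ s, dist p c₁ = r₁)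
    (h₂ : ∀ p ∈ s, dist p c₂ = r₂) : #s ≤ 2 := by
  by_contra! hs
  obtain ⟨p₁, hp₁, p₂, hp₂, p, hp, h12, h1, h2⟩ := two_lt_card.mp hs
  rcases eq_of_dist_eq_of_dist_eq_of_finrank_eq_two hd hc h12 (h₁ p₁ hp₁) (h₁ p₂ hp₂) (h₁ p hp)
    (h₂ p₁ hp₁) (h₂ p₂ hp₂) (h₂ p hp) with rfl | rfl
  · exact h1 rfl
  · exact h2 rfl

end EuclideanGeometry

namespace SimpleGraph

variable {V : Type*}

theorem edgeLengths_finite [Finite V] (G : SimpleGraph V) (f : V → Plane) :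
    (G.edgeLengths f).Finite :=
  (Set.finite_range fun p : V × V => Dist.dist (f p.1) (f p.2)).subset
    fun _ ⟨u, v, _, hd⟩ => ⟨(u, v), hd⟩

theorem ddn_le_ncard_edgeLengths {G : SimpleGraph V} {f : V → Plane} (hf : G.IsDegenDrawing f) :
    G.ddn ≤ (G.edgeLengths f).ncard :=
  Nat.sInf_le ⟨f, hf, rfl⟩

theorem le_ddn {G : SimpleGraph V} {m : ℕ} (hG : ∃ f, G.IsDegenDrawing f)
    (h : ∀ f, G.IsDegenDrawing f → m ≤ (G.edgeLengths f).ncard) : m ≤ G.ddn := by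
  obtain ⟨f, hf⟩ := hG
  refine le_csInf ⟨_, f, hf, rfl⟩ ?_
  rintro _ ⟨g, hg, rfl⟩
  exact h g hg

theorem edgeLengths_completeBipartiteGraph {α β : Type*} (f : α ⊕ β → Plane) :
    (completeBipartiteGraph α β).edgeLengths f =
      {d | ∃ a b, Dist.dist (f (Sum.inl a)) (f (Sum.inr b)) = d} := by
  ext d
  constructor
  · rintro ⟨u | u, v | v, hadj, rfl⟩ <;> simp at hadj
    · exact ⟨u, v, rfl⟩
    · exact ⟨v, u, _root_.dist_comm _ _⟩
  · rintro ⟨a, b, rfl⟩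
    exact ⟨_, _, by simp, rfl⟩

theorem card_le_two_mul_ncard_edgeLengths_sq {α β : Type*} [Finite α] [Fintype β] {a b : α}
    (hab : a ≠ b) {f : α ⊕ β → Plane} (hf : Injective f) :
    Fintype.card β ≤ 2 * ((completeBipartiteGraph α β).edgeLengths f).ncard ^ 2 := by
  classical
  have hL := (completeBipartiteGraph α β).edgeLengths_finite f
  have hmem : ∀ c w, Dist.dist (f (Sum.inr w)) (f (Sum.inl c)) ∈ hL.toFinset := fun c w => by
    rw [Set.Finite.mem_toFinset, edgeLengths_completeBipartiteGraph, _root_.dist_comm]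
    exact ⟨c, w, rfl⟩
  let g : β → ℝ × ℝ := fun w => (Dist.dist (f (Sum.inr w)) (f (Sum.inl a)),
    Dist.dist (f (Sum.inr w)) (f (Sum.inl b)))
  have hfibre : ∀ x ∈ hL.toFinset ×ˢ hL.toFinset, #{w | g w = x} ≤ 2 := by
    intro x _
    rw [← card_image_of_injective _ (hf.comp Sum.inr_injective)]
    refine EuclideanGeometry.card_le_two_of_forall_dist_eq finrank_euclideanSpace_fin
      (hf.ne (Sum.inl_injective.ne hab)) (r₁ := x.1) (r₂ := x.2) ?_ ?_ <;>
    · simp only [mem_image, mem_filter, mem_univ, true_and]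
      rintro _ ⟨w, rfl, rfl⟩
      rfl
  have := card_le_mul_card_image_of_maps_to (fun w _ => mem_product.mpr ⟨hmem a w, hmem b w⟩)
    2 hfibre
  rwa [card_univ, card_product, ← sq, ← Set.ncard_eq_toFinset_card _ hL] at this

end SimpleGraph

theorem EuclideanSpace.dist_eq_fin_two (p q : Plane) :
    dist p q = √((p 0 - q 0) ^ 2 + (p 1 - q 1) ^ 2) := by
  simp [EuclideanSpace.dist_eq, Fin.sum_univ_two, Real.dist_eq, sq_abs]

def circleRadicand (r s : ℝ) : ℝ := r - ((r - s + 1) / 2) ^ 2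

/-- For `σ = true` / `false`, the upper / lower intersection point of the circles of squared
radii `r` and `s` about `(-1/2, 0)` and `(1/2, 0)`; it exists when `0 ≤ circleRadicand r s`. -/
def circleIntersection (r s : ℝ) (σ : Bool) : Plane :=
  !₂[(r - s) / 2, (if σ then 1 else -1) * √(circleRadicand r s)]

section circleIntersection

variable {r s : ℝ} (σ : Bool)

theorem circleIntersection_one_sq (h : 0 ≤ circleRadicand r s) :
    circleIntersection r s σ 1 ^ 2 = circleRadicand r s := by
  cases σ <;> simp [circleIntersection, Real.sq_sqrt h]

theorem dist_circleIntersection (h : 0 ≤ circleRadicand r s) (a : ℝ) :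
    dist (circleIntersection r s σ) !₂[a, 0] =
      √(((r - s) / 2 - a) ^ 2 + circleRadicand r s) := by
  rw [EuclideanSpace.dist_eq_fin_two, ← circleIntersection_one_sq σ h]
  simp [circleIntersection]

theorem dist_circleIntersection_left (h : 0 ≤ circleRadicand r s) :
    dist (circleIntersection r s σ) !₂[-1 / 2, 0] = √r := by
  rw [dist_circleIntersection σ h, circleRadicand]
  ring_nf

theorem dist_circleIntersection_right (h : 0 ≤ circleRadicand r s) :
    dist (circleIntersection r s σ) !₂[1 / 2, 0] = √s := by
  rw [dist_circleIntersection σ h, circleRadicand]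
  ring_nf

theorem dist_circleIntersection_middle (h : 0 ≤ circleRadicand r s) :
    dist (circleIntersection r s σ) !₂[0, 0] = √((r + s) / 2 - 1 / 4) := by
  rw [dist_circleIntersection σ h, circleRadicand]
  ring_nf

theorem circleIntersection_one_ne_zero (h : 0 < circleRadicand r s) :
    circleIntersection r s σ 1 ≠ 0 := by
  rw [← pow_ne_zero_iff two_ne_zero, circleIntersection_one_sq σ h.le]
  exact h.ne'

theorem circleIntersection_inj {r' s' : ℝ} {σ' : Bool} (h : 0 < circleRadicand r s)
    (h' : 0 < circleRadicand r' s')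
    (heq : circleIntersection r s σ = circleIntersection r' s' σ') :
    r = r' ∧ s = s' ∧ σ = σ' := by
  have hr : r = r' := by
    have := congrArg (dist · !₂[-1 / 2, 0]) heq
    simp only [dist_circleIntersection_left σ h.le, dist_circleIntersection_left σ' h'.le] at this
    rw [circleRadicand] at h h'
    rwa [Real.sqrt_inj (by nlinarith) (by nlinarith)] at this
  have hs : s = s' := by
    have := congrArg (· 0) heq
    simp [circleIntersection] at this
    linarith
  subst hr hs
  refine ⟨rfl, rfl, ?_⟩
  have := congrArg (· 1) heq
  have hpos := Real.sqrt_pos.mpr h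
  cases σ <;> cases σ' <;> simp [circleIntersection] at this ⊢ <;> linarith

end circleIntersection

theorem circleRadicand_pos_of_mem_Ico {r s : ℝ} (hr : r ∈ Set.Ico 1 2) (hs : s ∈ Set.Ico 1 2) :
    0 < circleRadicand r s := by
  obtain ⟨hr₁, hr₂⟩ := hr
  obtain ⟨hs₁, hs₂⟩ := hs
  rw [circleRadicand]
  nlinarith

theorem one_add_div_mem_Ico {k : ℕ} (i : Fin k) : 1 + (i : ℝ) / k ∈ Set.Ico 1 2 := by
  have hk : (0 : ℝ) < k := by exact_mod_cast i.pos
  have hi : (i : ℝ) < k := by exact_mod_cast i.isLt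
  constructor
  · have : (0 : ℝ) ≤ i / k := by positivity
    linarith
  · have : (i : ℝ) / k < 1 := (div_lt_one hk).mpr hi
    linarith

def gridPoint (k : ℕ) (x : Fin k × Fin k × Bool) : Plane :=
  circleIntersection (1 + (x.1 : ℝ) / k) (1 + (x.2.1 : ℝ) / k) x.2.2

theorem circleRadicand_grid_pos {k : ℕ} (i j : Fin k) :
    0 < circleRadicand (1 + (i : ℝ) / k) (1 + (j : ℝ) / k) :=
  circleRadicand_pos_of_mem_Ico (one_add_div_mem_Ico i) (one_add_div_mem_Ico j)

theorem gridPoint_one_ne_zero {k : ℕ} (x : Fin k × Fin k × Bool) : gridPoint k x 1 ≠ 0 :=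
  circleIntersection_one_ne_zero _ (circleRadicand_grid_pos _ _)

theorem gridPoint_injective (k : ℕ) : Injective (gridPoint k) := by
  rintro ⟨i, j, σ⟩ ⟨i', j', σ'⟩ heq
  obtain ⟨hi, hj, rfl⟩ :=
    circleIntersection_inj σ (circleRadicand_grid_pos i j) (circleRadicand_grid_pos i' j') heq
  have hk : (k : ℝ) ≠ 0 := by exact_mod_cast i.pos.ne'
  simp only [add_right_inj, div_left_inj' hk, Nat.cast_inj, Fin.val_inj] at hi hj
  rw [hi, hj]

def gridCentre : Fin 3 → Plane := ![!₂[-1 / 2, 0], !₂[0, 0], !₂[1 / 2, 0]]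

theorem gridCentre_one (t : Fin 3) : gridCentre t 1 = 0 := by
  fin_cases t <;> simp [gridCentre]

theorem gridCentre_injective : Injective gridCentre := by
  intro t t' h
  have := congrArg (· 0) h
  fin_cases t <;> fin_cases t' <;> norm_num [gridCentre] at this <;> rfl

def gridLengths (k : ℕ) : Finset ℝ :=
  (range k).image (fun i : ℕ => √(1 + i / k)) ∪
    (range (2 * k - 1)).image (fun m : ℕ => √(3 / 4 + m / (2 * k)))

theorem card_gridLengths_le (k : ℕ) : #(gridLengths k) ≤ 3 * k - 1 := by
  calc #(gridLengths k) ≤ k + (2 * k - 1) := by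
        refine (card_union_le _ _).trans (add_le_add ?_ ?_) <;>
          exact card_image_le.trans (card_range _).le
    _ ≤ 3 * k - 1 := by omega

theorem dist_gridCentre_gridPoint_mem {k : ℕ} (t : Fin 3) (x : Fin k × Fin k × Bool) :
    dist (gridCentre t) (gridPoint k x) ∈ gridLengths k := by
  obtain ⟨i, j, σ⟩ := x
  have h := (circleRadicand_grid_pos i j).le
  rw [dist_comm]
  fin_cases t
  · refine mem_union_left _ (mem_image.mpr ⟨i, mem_range.mpr i.isLt, ?_⟩)
    exact (dist_circleIntersection_left σ h).symm
  · refine mem_union_right _ (mem_image.mpr ⟨i + j, mem_range.mpr (by omega), ?_⟩)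
    refine Eq.trans ?_ (dist_circleIntersection_middle σ h).symm
    push_cast
    ring_nf
  · refine mem_union_left _ (mem_image.mpr ⟨j, mem_range.mpr j.isLt, ?_⟩)
    exact (dist_circleIntersection_right σ h).symm

theorem exists_injective_ncard_edgeLengths_le (β : Type*) [Fintype β] (k : ℕ)
    (hβ : Fintype.card β ≤ 2 * k ^ 2) :
    ∃ f : Fin 3 ⊕ β → Plane, Injective f ∧
      ((completeBipartiteGraph (Fin 3) β).edgeLengths f).ncard ≤ 3 * k - 1 := by
  obtain ⟨e⟩ : Nonempty (β ↪ Fin k × Fin k × Bool) := Function.Embedding.nonempty_of_card_le <| by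
    simpa [sq, mul_comm, ← mul_assoc] using hβ
  refine ⟨Sum.elim gridCentre (gridPoint k ∘ e), ?_, ?_⟩
  · refine gridCentre_injective.sumElim ((gridPoint_injective k).comp e.injective) ?_
    intro t w h
    exact gridPoint_one_ne_zero (e w) ((congrArg (· 1) h).symm.trans (gridCentre_one t))
  · refine (Set.ncard_le_ncard ?_ (gridLengths k).finite_toSet).trans
      ((Set.ncard_coe_finset _).trans_le (card_gridLengths_le k))
    rw [SimpleGraph.edgeLengths_completeBipartiteGraph]
    rintro _ ⟨t, w, rfl⟩
    exact dist_gridCentre_gridPoint_mem t (e w)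

theorem Nat.ceil_sqrt_div_two_le_iff (n m : ℕ) : ⌈√((n : ℝ) / 2)⌉₊ ≤ m ↔ n ≤ 2 * m ^ 2 := by
  rw [Nat.ceil_le, Real.sqrt_le_left (Nat.cast_nonneg m), div_le_iff₀ two_pos]
  norm_cast
  rw [mul_comm]

theorem stmt6_general (n : ℕ) :
    ⌈Real.sqrt ((n : ℝ) / 2)⌉₊ ≤ (completeBipartiteGraph (Fin 3) (Fin n)).ddn ∧
    (completeBipartiteGraph (Fin 3) (Fin n)).ddn ≤ 3 * ⌈Real.sqrt ((n : ℝ) / 2)⌉₊ - 1 := by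
  obtain ⟨f, hf, hcard⟩ := exists_injective_ncard_edgeLengths_le (Fin n) ⌈√((n : ℝ) / 2)⌉₊
    (by simpa using (Nat.ceil_sqrt_div_two_le_iff n _).mp le_rfl)
  refine ⟨SimpleGraph.le_ddn ⟨f, hf⟩ fun g hg => ?_,
    (SimpleGraph.ddn_le_ncard_edgeLengths hf).trans hcard⟩
  rw [Nat.ceil_sqrt_div_two_le_iff]
  simpa using SimpleGraph.card_le_two_mul_ncard_edgeLengths_sq (by decide : (0 : Fin 3) ≠ 1) hg

/-- For `n ≥ 1`, `⌈√(n/2)⌉ ≤ ddn (K_{3,n}) ≤ 3⌈√(n/2)⌉ − 1`. -/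
theorem stmt6 (n : ℕ) (hn : 1 ≤ n) :
    ⌈Real.sqrt ((n : ℝ) / 2)⌉₊ ≤ (completeBipartiteGraph (Fin 3) (Fin n)).ddn ∧
    (completeBipartiteGraph (Fin 3) (Fin n)).ddn ≤ 3 * ⌈Real.sqrt ((n : ℝ) / 2)⌉₊ - 1 :=
  stmt6_general n
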